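/- Let E be a complex vector space, N ≥ 2 an integer, and q a primitive N-th root of unity. Suppose d, h are endomorphisms of E with d^N = 0 and h∘d − q·d∘h = I. Then H^{(k)} = ker(d^k)/im(d^{N-k}) = 0 for all k ∈ {1, …, N−1}. -/

import Mathlib

open Polynomial

noncomputable section QHomotopyAux

/-- `bqq q n = (q^n - 1)/(q - 1)`, the q-integer. -/
def bqq (q : ℂ) : ℕ → ℂ
  | 0 => 0
  | n + 1 => q * bqq q n + 1

lemma bqq_mul (q : ℂ) (n : ℕ) : (q - 1) * bqq q n = q ^ n - 1 := by
  induction n with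
  | zero => simp [bqq]
  | succ n ih =>
    show (q - 1) * (q * bqq q n + 1) = q ^ (n + 1) - 1
    linear_combination q * ih

/-- The polynomial with `h^m * d^m = aeval (d*h) (Fq q m)`. -/
def Fq (q : ℂ) : ℕ → ℂ[X]
  | 0 => 1
  | m + 1 => (Fq q m).comp (C q * X + 1) * (C q * X + 1)

/-- The polynomial with `d^m * h^m = aeval (d*h) (Pq q m)`. -/
def Pq (q : ℂ) : ℕ → ℂ[X]
  | 0 => 1
  | m + 1 => (Pq q m).comp (C q⁻¹ * X - C q⁻¹) * X

/-- Semiconjugation extends from a generator to all polynomials. -/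
lemma semiconj_aeval {A : Type*} [Ring A] [Algebra ℂ A] {f u w : A}
    (H : f * u = w * f) (p : ℂ[X]) : f * aeval u p = aeval w p * f := by
  induction p using Polynomial.induction_on with
  | C a => simp [Algebra.commutes]
  | add p r hp hr => simp only [map_add, mul_add, add_mul, hp, hr]
  | monomial n a ih =>
    have h1 : (aeval u) (C a * X ^ (n + 1)) = (aeval u) (C a * X ^ n) * u := by
      simp [pow_succ, mul_assoc]
    have h2 : (aeval w) (C a * X ^ (n + 1)) = (aeval w) (C a * X ^ n) * w := by
      simp [pow_succ, mul_assoc]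
    rw [h1, h2, ← mul_assoc, ih, mul_assoc, H, ← mul_assoc]

/-- Closed form for `Pq`: roots are the q-integers `bqq q j`, `j < m`. -/
lemma Pq_closed (q : ℂ) (hq0 : q ≠ 0) (m : ℕ) :
    ∃ c : ℂ, c ≠ 0 ∧ Pq q m = C c * ∏ i ∈ Finset.range m, (X - C (bqq q i)) := by
  induction m with
  | zero => exact ⟨1, one_ne_zero, by simp [Pq]⟩
  | succ m ih =>
    obtain ⟨c, hc, hP⟩ := ih
    refine ⟨c * (q⁻¹) ^ m, mul_ne_zero hc (pow_ne_zero _ (inv_ne_zero hq0)), ?_⟩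
    have hfac : ∀ β : ℂ, (X - C β).comp (C q⁻¹ * X - C q⁻¹)
        = C q⁻¹ * (X - C (q * β + 1)) := by
      intro β
      have hh : q⁻¹ * (q * β + 1) = β + q⁻¹ := by field_simp
      rw [sub_comp, X_comp, C_comp, mul_sub, ← C_mul, hh, C_add]
      ring
    rw [show Pq q (m + 1) = (Pq q m).comp (C q⁻¹ * X - C q⁻¹) * X from rfl, hP,
      mul_comp, C_comp, prod_comp]
    have hprod : (∏ i ∈ Finset.range m, ((X - C (bqq q i)).comp (C q⁻¹ * X - C q⁻¹)))
        = ∏ i ∈ Finset.range m, (C q⁻¹ * (X - C (bqq q (i + 1)))) := by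
      refine Finset.prod_congr rfl fun i _ => ?_
      rw [hfac]
      rfl
    rw [hprod, Finset.prod_mul_distrib, Finset.prod_const,
      Finset.prod_range_succ' (fun i => X - C (bqq q i)) m]
    have hb0 : (X : ℂ[X]) - C (bqq q 0) = X := by
      show (X : ℂ[X]) - C 0 = X
      simp
    rw [hb0, C_mul, ← C_pow, Finset.card_range]
    ring

/-- Closed form for `Fq` (for `m ≤ N`): roots are `bqq q (N - (i+1))`, `i < m`. -/
lemma Fq_closed (q : ℂ) (hq0 : q ≠ 0) (N : ℕ) (hN1 : 1 ≤ N) (hbN : bqq q N = 0) :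
    ∀ m, m ≤ N →
    ∃ c : ℂ, c ≠ 0 ∧
      Fq q m = C c * ∏ i ∈ Finset.range m, (X - C (bqq q (N - (i + 1)))) := by
  have hfac : ∀ s : ℕ, (X - C (bqq q (s + 1))).comp (C q * X + 1)
      = C q * (X - C (bqq q s)) := by
    intro s
    have hb : bqq q (s + 1) = q * bqq q s + 1 := rfl
    rw [sub_comp, X_comp, C_comp, hb, mul_sub, ← C_mul]
    have : (C (q * bqq q s) : ℂ[X]) = C (q * bqq q s + 1) - 1 := by
      rw [C_add, C_1]; ring
    rw [this]
    ring
  intro m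
  induction m with
  | zero => exact fun _ => ⟨1, one_ne_zero, by simp [Fq]⟩
  | succ m ih =>
    intro hmN
    obtain ⟨c, hc, hF⟩ := ih (by omega)
    refine ⟨c * q ^ m * q, by simp [hc, hq0], ?_⟩
    rw [show Fq q (m + 1) = (Fq q m).comp (C q * X + 1) * (C q * X + 1) from rfl, hF,
      mul_comp, C_comp, prod_comp]
    have hprod : (∏ i ∈ Finset.range m, ((X - C (bqq q (N - (i + 1)))).comp (C q * X + 1)))
        = ∏ i ∈ Finset.range m, (C q * (X - C (bqq q (N - (i + 2))))) := by
      refine Finset.prod_congr rfl fun i hi => ?_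
      have hi' : i < m := Finset.mem_range.mp hi
      have hidx : N - (i + 1) = (N - (i + 2)) + 1 := by omega
      rw [hidx, hfac]
    have hlast : (C q * X + 1 : ℂ[X]) = C q * (X - C (bqq q (N - 1))) := by
      have hNb : q * bqq q (N - 1) + 1 = 0 := by
        have h1 : bqq q ((N - 1) + 1) = q * bqq q (N - 1) + 1 := rfl
        rw [show (N - 1) + 1 = N by omega, hbN] at h1
        exact h1.symm
      rw [mul_sub, ← C_mul]
      have : (C (q * bqq q (N - 1)) : ℂ[X]) = - 1 := by
        rw [show q * bqq q (N - 1) = -1 by linear_combination hNb]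
        simp
      rw [this]
      ring
    rw [hprod, Finset.prod_mul_distrib, Finset.prod_const, hlast,
      Finset.prod_range_succ' (fun i => X - C (bqq q (N - (i + 1)))) m]
    rw [C_mul, C_mul, ← C_pow, Finset.card_range]
    ring

end QHomotopyAux

set_option maxRecDepth 8000 in
set_option maxHeartbeats 1600000 in
theorem generalized_homology_vanishes_of_homotopy
    (E : Type*) [AddCommGroup E] [Module ℂ E]
    (N : ℕ) (hN : 2 ≤ N) (q : ℂ) (hq : IsPrimitiveRoot q N)
    (d h : E →ₗ[ℂ] E) (hd : d ^ N = 0)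
    (hh : h ∘ₗ d - q • (d ∘ₗ h) = LinearMap.id) :
    ∀ k, 1 ≤ k → k ≤ N - 1 →
      LinearMap.ker (d ^ k) ≤ LinearMap.range (d ^ (N - k)) := by
  have hq0 : q ≠ 0 := hq.ne_zero (by omega)
  have hq1 : q ≠ 1 := hq.ne_one hN
  have hqN : q ^ N = 1 := hq.pow_eq_one
  have hbN : bqq q N = 0 := by
    have h1 := bqq_mul q N
    rw [hqN, sub_self] at h1
    exact (mul_eq_zero.mp h1).resolve_left (sub_ne_zero.mpr hq1)
  have hbinj : ∀ i j, i < N → j < N → bqq q i = bqq q j → i = j := by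
    intro i j hi hj hb
    have hij : (q : ℂ) ^ i = q ^ j := by
      have h1 := bqq_mul q i
      have h2 := bqq_mul q j
      rw [hb] at h1
      linear_combination h2 - h1
    exact hq.pow_inj hi hj hij
  set u : E →ₗ[ℂ] E := d * h with hu
  have hh' : h * d = q • (d * h) + 1 := by
    rw [sub_eq_iff_eq_add] at hh
    calc h * d = h ∘ₗ d := rfl
      _ = LinearMap.id + q • (d ∘ₗ h) := hh
      _ = q • (d * h) + 1 := by rw [add_comm]; rfl
  have haevs : aeval u (C q * X + 1) = q • u + 1 := by
    rw [map_add, map_one, map_mul, aeval_C, aeval_X, Algebra.smul_def]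
  have haevt : aeval u (C q⁻¹ * X - C q⁻¹) = q⁻¹ • u - q⁻¹ • (1 : E →ₗ[ℂ] E) := by
    rw [map_sub, map_mul, aeval_C, aeval_X, Algebra.smul_def, Algebra.smul_def, mul_one]
  have hmove_h : ∀ p : ℂ[X], h * aeval u p = aeval u (p.comp (C q * X + 1)) * h := by
    intro p
    have hrel : h * u = (q • u + 1) * h := by
      calc h * u = (h * d) * h := by rw [hu, ← mul_assoc]
        _ = (q • u + 1) * h := by rw [hh', hu]
    rw [aeval_comp, haevs]
    exact semiconj_aeval hrel p
  have hmove_d : ∀ p : ℂ[X],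
      d * aeval u p = aeval u (p.comp (C q⁻¹ * X - C q⁻¹)) * d := by
    intro p
    have hud : u * d = q • (d * u) + d := by
      calc u * d = d * (h * d) := by rw [hu, mul_assoc]
        _ = d * (q • (d * h) + 1) := by rw [hh']
        _ = q • (d * u) + d := by rw [mul_add, mul_smul_comm, mul_one, hu]
    have hrel : d * u = (q⁻¹ • u - q⁻¹ • (1 : E →ₗ[ℂ] E)) * d := by
      have he : (q⁻¹ • u - q⁻¹ • (1 : E →ₗ[ℂ] E)) * d
          = q⁻¹ • (u * d) - q⁻¹ • d := by
        rw [sub_mul, smul_mul_assoc, smul_mul_assoc, one_mul]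
      rw [he, hud, smul_add, smul_smul, inv_mul_cancel₀ hq0, one_smul]
      abel
    rw [aeval_comp, haevt]
    exact semiconj_aeval hrel p
  have hI1 : ∀ m : ℕ, h ^ m * d ^ m = aeval u (Fq q m) := by
    intro m
    induction m with
    | zero => simp [Fq]
    | succ m ih =>
      have hsplit : h ^ (m + 1) * d ^ (m + 1) = h * (h ^ m * d ^ m) * d := by
        rw [pow_succ' h, pow_succ d, mul_assoc, ← mul_assoc (h ^ m), ← mul_assoc]
      rw [hsplit, ih, hmove_h, mul_assoc, hh',
        show Fq q (m + 1) = (Fq q m).comp (C q * X + 1) * (C q * X + 1) from rfl,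
        map_mul, haevs, hu]
  have hI2 : ∀ m : ℕ, d ^ m * h ^ m = aeval u (Pq q m) := by
    intro m
    induction m with
    | zero => simp [Pq]
    | succ m ih =>
      have hsplit : d ^ (m + 1) * h ^ (m + 1) = d * (d ^ m * h ^ m) * h := by
        rw [pow_succ' d, pow_succ h, mul_assoc, ← mul_assoc (d ^ m), ← mul_assoc]
      rw [hsplit, ih, hmove_d, mul_assoc,
        show Pq q (m + 1) = (Pq q m).comp (C q⁻¹ * X - C q⁻¹) * X from rfl,
        map_mul, aeval_X, hu]
  -- main argument
  intro k hk1 hkN x hx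
  rw [LinearMap.mem_ker] at hx
  obtain ⟨c, hc, hFk⟩ := Fq_closed q hq0 N (by omega) hbN k (by omega)
  obtain ⟨c', hc', hPk⟩ := Pq_closed q hq0 (N - k)
  -- coprimality of the two products
  have hcop : IsCoprime (∏ i ∈ Finset.range k, (X - C (bqq q (N - (i + 1)))))
      (∏ j ∈ Finset.range (N - k), (X - C (bqq q j))) := by
    apply IsCoprime.prod_left
    intro i hi
    apply IsCoprime.prod_right
    intro j hj
    apply Polynomial.isCoprime_X_sub_C_of_isUnit_sub
    have hi' : i < k := Finset.mem_range.mp hi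
    have hj' : j < N - k := Finset.mem_range.mp hj
    have hne : bqq q (N - (i + 1)) ≠ bqq q j := by
      intro hcontra
      have := hbinj (N - (i + 1)) j (by omega) (by omega) hcontra
      omega
    exact (sub_ne_zero.mpr hne).isUnit
  obtain ⟨A, B, hAB⟩ := hcop
  -- Bezout for Fq and Pq themselves
  have hbez : (A * C c⁻¹) * Fq q k + (B * C c'⁻¹) * Pq q (N - k) = 1 := by
    rw [hFk, hPk]
    have e1 : (C c⁻¹ : ℂ[X]) * C c = 1 := by
      rw [← C_mul, inv_mul_cancel₀ hc, C_1]
    have e2 : (C c'⁻¹ : ℂ[X]) * C c' = 1 := by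
      rw [← C_mul, inv_mul_cancel₀ hc', C_1]
    calc (A * C c⁻¹) * (C c * ∏ i ∈ Finset.range k, (X - C (bqq q (N - (i + 1)))))
          + (B * C c'⁻¹) * (C c' * ∏ j ∈ Finset.range (N - k), (X - C (bqq q j)))
        = (C c⁻¹ * C c) * (A * ∏ i ∈ Finset.range k, (X - C (bqq q (N - (i + 1)))))
          + (C c'⁻¹ * C c') * (B * ∏ j ∈ Finset.range (N - k), (X - C (bqq q j))) := by
          ring
      _ = 1 := by rw [e1, e2, one_mul, one_mul, hAB]
  -- apply aeval u
  have hop : aeval u (A * C c⁻¹) * (h ^ k * d ^ k)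
      + (d ^ (N - k) * h ^ (N - k)) * aeval u (B * C c'⁻¹) = 1 := by
    rw [hI1, hI2, ← map_mul, ← map_mul, mul_comm (Pq q (N - k)) (B * C c'⁻¹), ← map_add,
      hbez, map_one]
  -- conclude
  refine ⟨(h ^ (N - k) * aeval u (B * C c'⁻¹)) x, ?_⟩
  have hx1 : (aeval u (A * C c⁻¹) * (h ^ k * d ^ k)) x = 0 := by
    have : (h ^ k * d ^ k) x = (h ^ k) ((d ^ k) x) := rfl
    rw [Module.End.mul_apply, this, hx, map_zero, map_zero]
  have := congrArg (fun f : E →ₗ[ℂ] E => f x) hop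
  simp only [LinearMap.add_apply, Module.End.one_apply] at this
  rw [hx1, zero_add] at this
  calc (d ^ (N - k)) ((h ^ (N - k) * aeval u (B * C c'⁻¹)) x)
      = ((d ^ (N - k)) * (h ^ (N - k) * aeval u (B * C c'⁻¹))) x := rfl
    _ = ((d ^ (N - k) * h ^ (N - k)) * aeval u (B * C c'⁻¹)) x := by
        rw [mul_assoc]
    _ = x := this
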